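/- arXiv:1602.01529 — 4 statements merged into one kernel-verified Lean document; each statement's English description precedes it below -/
import Mathlib

section
/- The convex hull of the null quadric 𝔄 = {z ∈ ℂⁿ : z₁² + ⋯ + zₙ² = 0} equals all of ℂⁿ, for every n ≥ 3 (identifying ℂⁿ with ℝ^{2n} as a real vector space). -/
open Complex

/-- The convex hull (over ℝ) of the null quadric
`𝔄 = {z ∈ ℂⁿ : z₁² + ⋯ + zₙ² = 0}` is all of `ℂⁿ`, for every `n ≥ 3`. -/
theorem stmt3 (n : ℕ) (hn : 3 ≤ n) :
    convexHull ℝ {z : Fin n → ℂ | ∑ j, z j ^ 2 = 0} = Set.univ := by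
  apply Set.eq_univ_of_forall
  intro z
  have hn0 : (0:ℕ) < n := by omega
  have hnR : (n : ℝ) ≠ 0 := Nat.cast_ne_zero.mpr (by omega)
  set i0 : Fin n := ⟨0, by omega⟩ with hi0
  set i1 : Fin n := ⟨1, by omega⟩ with hi1
  have h01 : i0 ≠ i1 := by simp [hi0, hi1, Fin.ext_iff]
  set σ : Fin n → Fin n := fun j => if j = i0 then i1 else i0 with hσ
  have hσne : ∀ j, σ j ≠ j := by
    intro j
    by_cases h : j = i0
    · simp [hσ, h]; exact fun hh => h01 (h ▸ hh.symm)
    · simp [hσ, h]; exact fun hh => h hh.symm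
  set p : Fin n × Bool → (Fin n → ℂ) := fun jb k =>
      if k = jb.1 then (n : ℂ) * z jb.1
      else if k = σ jb.1 then (if jb.2 then I else -I) * ((n : ℂ) * z jb.1)
      else 0 with hp
  have hmem : ∀ jb : Fin n × Bool, p jb ∈ {z : Fin n → ℂ | ∑ j, z j ^ 2 = 0} := by
    rintro ⟨j, b⟩
    have hne : j ≠ σ j := (hσne j).symm
    show (∑ k, p (j, b) k ^ 2) = 0
    have key : ∀ k, p (j, b) k ^ 2 =
        (if k = j then ((n : ℂ) * z j) ^ 2 else 0) +
        (if k = σ j then ((if b then I else -I) * ((n : ℂ) * z j)) ^ 2 else 0) := by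
      intro k
      by_cases hk1 : k = j
      · have hk2 : ¬ k = σ j := fun h => hne (hk1 ▸ h)
        simp only [hp]
        rw [if_pos hk1, if_pos hk1, if_neg hk2]
        ring
      · by_cases hk2 : k = σ j
        · simp only [hp]
          rw [if_neg hk1, if_pos hk2, if_neg hk1, if_pos hk2]
          ring
        · simp only [hp]
          rw [if_neg hk1, if_neg hk2, if_neg hk1, if_neg hk2]
          ring
    rw [Finset.sum_congr rfl fun k _ => key k, Finset.sum_add_distrib,
      Finset.sum_ite_eq' Finset.univ j, Finset.sum_ite_eq' Finset.univ (σ j)]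
    simp only [Finset.mem_univ, if_true]
    have hI : ((if b then I else -I) * ((n : ℂ) * z j)) ^ 2 = -(((n : ℂ) * z j) ^ 2) := by
      cases b <;> simp [mul_pow, Complex.I_sq]
    rw [hI]
    ring
  have hw : ∑ _jb : Fin n × Bool, (1 / (2 * n) : ℝ) = 1 := by
    rw [Finset.sum_const, Finset.card_univ, Fintype.card_prod, Fintype.card_fin,
      Fintype.card_bool, nsmul_eq_mul]
    push_cast
    field_simp
  have hcm : Finset.univ.centerMass (fun _ : Fin n × Bool => (1 / (2 * n) : ℝ)) p = z := by
    rw [Finset.centerMass_eq_of_sum_1 _ _ hw]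
    funext k
    have happ : (∑ jb : Fin n × Bool, (1 / (2 * n) : ℝ) • p jb) k
        = ∑ jb : Fin n × Bool, (1 / (2 * n) : ℝ) • p jb k := by
      simp [Finset.sum_apply]
    rw [happ]
    have hsum : ∑ jb : Fin n × Bool, p jb k = 2 * (n : ℂ) * z k := by
      rw [Fintype.sum_prod_type]
      have key : ∀ j : Fin n, ∑ b : Bool, p (j, b) k
          = if k = j then 2 * ((n:ℂ) * z j) else 0 := by
        intro j
        rw [Fintype.sum_bool]
        by_cases hk1 : k = j
        · simp only [hp]
          rw [if_pos hk1, if_pos hk1, if_pos hk1]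
          ring
        · by_cases hk2 : k = σ j
          · simp only [hp]
            rw [if_neg hk1, if_pos hk2, if_neg hk1, if_pos hk2, if_neg hk1]
            norm_num
          · simp only [hp]
            rw [if_neg hk1, if_neg hk2, if_neg hk1, if_neg hk2, if_neg hk1]
            ring
      rw [Finset.sum_congr rfl fun j _ => key j, Finset.sum_ite_eq Finset.univ k]
      simp only [Finset.mem_univ, if_true]
      ring
    have hnC : (n : ℂ) ≠ 0 := Nat.cast_ne_zero.mpr (by omega)
    rw [← Finset.smul_sum, hsum, Complex.real_smul]
    push_cast
    field_simp
  rw [← hcm]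
  exact Finset.centerMass_mem_convexHull _ (fun _ _ => by positivity) (by rw [hw]; norm_num)
    (fun jb _ => hmem jb)
end

section
/- The punctured null quadric 𝔄ⁿ⁻¹_* is path-connected for every n ≥ 3. Concretely: for any two points z, w ∈ {ζ ∈ ℂⁿ \ {0} : ∑ ζ_j² = 0} with n ≥ 3, there is a continuous path in the punctured null quadric from z to w. -/
/-!
Writing `z = x + i y` with `x, y ∈ ℝⁿ`, the equation `∑ z_j² = 0` says `‖x‖ = ‖y‖` and
`⟪x, y⟫ = 0`, so the punctured null quadric is the image of `(0, ∞) × V` under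
`(r, x, y) ↦ r (x + i y)`, where `V` is the space of orthonormal pairs in `ℝⁿ`. For `n ≥ 3`, `V`
is path-connected: with `x` fixed, `y` ranges over the unit sphere of `x^⊥`, which is connected
because `dim x^⊥ ≥ 2`; and `(x, y)`, `(x', y')` are joined through `(x, v)` and `(x', v)` for a
unit vector `v` orthogonal to both `x` and `x'`.
-/

open scoped RealInnerProductSpace
open Module

section OrthonormalPairs

variable {E : Type*} [NormedAddCommGroup E] [InnerProductSpace ℝ E]

variable (E) in
def orthonormalPairs : Set (E × E) := {p | ‖p.1‖ = 1 ∧ ‖p.2‖ = 1 ∧ ⟪p.1, p.2⟫ = 0}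

lemma swap_mem_orthonormalPairs {x y : E} (h : (x, y) ∈ orthonormalPairs E) :
    (y, x) ∈ orthonormalPairs E :=
  ⟨h.2.1, h.1, by rw [real_inner_comm]; exact h.2.2⟩

variable [FiniteDimensional ℝ E]

lemma exists_norm_eq_one_forall_inner_eq_zero (s : Finset E) (hs : s.card < finrank ℝ E) :
    ∃ v : E, ‖v‖ = 1 ∧ ∀ u ∈ s, ⟪u, v⟫ = 0 := by
  set K := Submodule.span ℝ (s : Set E)
  have hK : 0 < finrank ℝ Kᗮ := by
    have := K.finrank_add_finrank_orthogonal
    have : finrank ℝ K ≤ s.card := finrank_span_finset_le_card s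
    omega
  have := finrank_pos_iff.1 hK
  obtain ⟨v, hv⟩ := exists_norm_eq Kᗮ zero_le_one
  exact ⟨v, hv, fun u hu => Submodule.inner_right_of_mem_orthogonal (Submodule.subset_span hu) v.2⟩

lemma isPathConnected_sphere_orthogonal_span_singleton (hE : 2 < finrank ℝ E) {x : E}
    (hx : x ≠ 0) : IsPathConnected (Metric.sphere (0 : (ℝ ∙ x)ᗮ) 1) := by
  refine isPathConnected_sphere ?_ 0 zero_le_one
  have := (ℝ ∙ x).finrank_add_finrank_orthogonal
  rw [finrank_span_singleton hx] at this
  rw [← finrank_eq_rank]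
  exact_mod_cast (by omega : 1 < finrank ℝ (ℝ ∙ x)ᗮ)

lemma joinedIn_orthonormalPairs_of_fst_eq (hE : 2 < finrank ℝ E) {x y y' : E}
    (hp : (x, y) ∈ orthonormalPairs E) (hq : (x, y') ∈ orthonormalPairs E) :
    JoinedIn (orthonormalPairs E) (x, y) (x, y') := by
  obtain ⟨hx, hy, hxy⟩ := hp
  obtain ⟨-, hy', hxy'⟩ := hq
  have hx0 : x ≠ 0 := by rintro rfl; simp at hx
  let v : (ℝ ∙ x)ᗮ := ⟨y, Submodule.mem_orthogonal_singleton_iff_inner_right.2 hxy⟩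
  let v' : (ℝ ∙ x)ᗮ := ⟨y', Submodule.mem_orthogonal_singleton_iff_inner_right.2 hxy'⟩
  have hv : JoinedIn (Metric.sphere 0 1) v v' :=
    (isPathConnected_sphere_orthogonal_span_singleton hE hx0).joinedIn v (by simpa using hy)
      v' (by simpa using hy')
  refine (hv.map (f := fun u => (x, (u : E))) (by fun_prop)).mono ?_
  rintro _ ⟨u, hu, rfl⟩
  exact ⟨hx, by simpa using hu, Submodule.mem_orthogonal_singleton_iff_inner_right.1 u.2⟩

lemma joinedIn_orthonormalPairs_of_snd_eq (hE : 2 < finrank ℝ E) {x x' y : E}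
    (hx : (x, y) ∈ orthonormalPairs E) (hx' : (x', y) ∈ orthonormalPairs E) :
    JoinedIn (orthonormalPairs E) (x, y) (x', y) := by
  refine ((joinedIn_orthonormalPairs_of_fst_eq hE (swap_mem_orthonormalPairs hx)
    (swap_mem_orthonormalPairs hx')).map continuous_swap).mono ?_
  rintro _ ⟨⟨y, x⟩, hp, rfl⟩
  exact swap_mem_orthonormalPairs hp

theorem isPathConnected_orthonormalPairs (hE : 2 < finrank ℝ E) :
    IsPathConnected (orthonormalPairs E) := by
  classical
  refine isPathConnected_iff.2 ⟨?_, ?_⟩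
  · obtain ⟨x, hx, -⟩ := exists_norm_eq_one_forall_inner_eq_zero (∅ : Finset E) (by simp; omega)
    obtain ⟨y, hy, hxy⟩ := exists_norm_eq_one_forall_inner_eq_zero {x} (by simp; omega)
    exact ⟨(x, y), hx, hy, hxy x (Finset.mem_singleton_self x)⟩
  · rintro ⟨x, y⟩ hp ⟨x', y'⟩ hq
    obtain ⟨v, hv, hxv⟩ := exists_norm_eq_one_forall_inner_eq_zero {x, x'}
      ((Finset.card_le_two).trans_lt hE)
    have hv₁ : (x, v) ∈ orthonormalPairs E := ⟨hp.1, hv, hxv x (by simp)⟩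
    have hv₂ : (x', v) ∈ orthonormalPairs E := ⟨hq.1, hv, hxv x' (by simp)⟩
    exact ((joinedIn_orthonormalPairs_of_fst_eq hE hp hv₁).trans
      (joinedIn_orthonormalPairs_of_snd_eq hE hv₁ hv₂)).trans
      (joinedIn_orthonormalPairs_of_fst_eq hE hv₂ hq)

end OrthonormalPairs

section NullQuadric

open Complex

variable {n : ℕ}

def nullQuadric (n : ℕ) : Set (Fin n → ℂ) := {ζ | ζ ≠ 0 ∧ ∑ j, ζ j ^ 2 = 0}

def ofReIm (x y : EuclideanSpace ℝ (Fin n)) : Fin n → ℂ := fun j => x j + y j * I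

lemma continuous_ofReIm :
    Continuous fun p : EuclideanSpace ℝ (Fin n) × EuclideanSpace ℝ (Fin n) => ofReIm p.1 p.2 := by
  unfold ofReIm; fun_prop

lemma exists_ofReIm_eq (z : Fin n → ℂ) : ∃ x y, ofReIm x y = z :=
  ⟨WithLp.toLp 2 fun j => (z j).re, WithLp.toLp 2 fun j => (z j).im,
    funext fun j => re_add_im (z j)⟩

lemma ofReIm_smul (r : ℝ) (x y : EuclideanSpace ℝ (Fin n)) :
    ofReIm (r • x) (r • y) = r • ofReIm x y := by
  funext j
  simp [ofReIm, mul_assoc]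

lemma ofReIm_eq_zero_iff {x y : EuclideanSpace ℝ (Fin n)} : ofReIm x y = 0 ↔ x = 0 ∧ y = 0 := by
  constructor
  · intro h
    constructor <;> ext j
    · simpa [ofReIm] using congr_arg re (congr_fun h j)
    · simpa [ofReIm] using congr_arg im (congr_fun h j)
  · rintro ⟨rfl, rfl⟩
    funext j
    simp [ofReIm]

lemma sum_sq_ofReIm (x y : EuclideanSpace ℝ (Fin n)) :
    ∑ j, ofReIm x y j ^ 2 = ((‖x‖ ^ 2 - ‖y‖ ^ 2 : ℝ) : ℂ) + ((2 * ⟪x, y⟫ : ℝ) : ℂ) * I := by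
  simp only [EuclideanSpace.real_norm_sq_eq, PiLp.inner_apply, RCLike.inner_apply, conj_trivial,
    ofReIm]
  push_cast
  rw [Finset.mul_sum, ← Finset.sum_sub_distrib, Finset.sum_mul, ← Finset.sum_add_distrib]
  refine Finset.sum_congr rfl fun j _ => ?_
  ring_nf
  rw [I_sq]
  ring

lemma sum_sq_ofReIm_eq_zero_iff {x y : EuclideanSpace ℝ (Fin n)} :
    ∑ j, ofReIm x y j ^ 2 = 0 ↔ ‖x‖ = ‖y‖ ∧ ⟪x, y⟫ = 0 := by
  rw [sum_sq_ofReIm, Complex.ext_iff]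
  simp only [add_re, add_im, mul_re, mul_im, ofReal_re, ofReal_im, I_re, I_im, zero_re, zero_im]
  rw [← sq_eq_sq₀ (norm_nonneg x) (norm_nonneg y)]
  constructor <;> intro h <;> constructor <;> linarith [h.1, h.2]

lemma ofReIm_mem_nullQuadric_iff {x y : EuclideanSpace ℝ (Fin n)} :
    ofReIm x y ∈ nullQuadric n ↔ x ≠ 0 ∧ ‖x‖ = ‖y‖ ∧ ⟪x, y⟫ = 0 := by
  rw [nullQuadric, Set.mem_ofPred_eq, sum_sq_ofReIm_eq_zero_iff, ne_eq, ofReIm_eq_zero_iff]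
  constructor
  · rintro ⟨hxy, hnorm, hinner⟩
    refine ⟨fun hx => hxy ⟨hx, ?_⟩, hnorm, hinner⟩
    rwa [← norm_eq_zero, ← hnorm, norm_eq_zero]
  · rintro ⟨hx, hnorm, hinner⟩
    exact ⟨fun h => hx h.1, hnorm, hinner⟩

lemma nullQuadric_eq_image :
    nullQuadric n = (fun q : ℝ × EuclideanSpace ℝ (Fin n) × EuclideanSpace ℝ (Fin n) =>
      q.1 • ofReIm q.2.1 q.2.2) '' Set.Ioi 0 ×ˢ orthonormalPairs (EuclideanSpace ℝ (Fin n)) := by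
  ext z
  constructor
  · intro hz
    obtain ⟨x, y, rfl⟩ := exists_ofReIm_eq z
    obtain ⟨hx, hnorm, hinner⟩ := ofReIm_mem_nullQuadric_iff.1 hz
    have hr : 0 < ‖x‖ := norm_pos_iff.2 hx
    refine ⟨(‖x‖, ‖x‖⁻¹ • x, ‖x‖⁻¹ • y), ⟨hr, ?_, ?_, ?_⟩, ?_⟩
    · rw [norm_smul, norm_inv, norm_norm, inv_mul_cancel₀ hr.ne']
    · rw [norm_smul, norm_inv, norm_norm, hnorm, inv_mul_cancel₀ (hnorm ▸ hr.ne')]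
    · rw [real_inner_smul_left, real_inner_smul_right, hinner, mul_zero, mul_zero]
    · dsimp only
      rw [← ofReIm_smul, smul_inv_smul₀ hr.ne', smul_inv_smul₀ hr.ne']
  · rintro ⟨⟨r, x, y⟩, ⟨hr, hx, hy, hxy⟩, rfl⟩
    dsimp only at hr hx hy hxy ⊢
    rw [← ofReIm_smul, ofReIm_mem_nullQuadric_iff]
    refine ⟨smul_ne_zero hr.ne' (norm_ne_zero_iff.1 (hx ▸ one_ne_zero)), ?_, ?_⟩
    · rw [norm_smul, norm_smul, hx, hy]
    · rw [real_inner_smul_left, real_inner_smul_right, hxy, mul_zero, mul_zero]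

theorem isPathConnected_nullQuadric (hn : 3 ≤ n) : IsPathConnected (nullQuadric n) := by
  rw [nullQuadric_eq_image]
  refine (((convex_Ioi 0).isPathConnected ⟨1, one_pos⟩).prod
    (isPathConnected_orthonormalPairs ?_)).image ?_
  · rwa [finrank_euclideanSpace_fin]
  · exact continuous_fst.smul (continuous_ofReIm.comp continuous_snd)

end NullQuadric

/-- The punctured null quadric `𝔄ⁿ⁻¹_* = {z ∈ ℂⁿ \ {0} : ∑ z_j² = 0}` is
path-connected for every `n ≥ 3`: any two of its points are joined by a
continuous path within it. -/
theorem stmt11 (n : ℕ) (hn : 3 ≤ n) (z w : Fin n → ℂ)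
    (hz : z ∈ {ζ : Fin n → ℂ | ζ ≠ 0 ∧ ∑ j, ζ j ^ 2 = 0})
    (hw : w ∈ {ζ : Fin n → ℂ | ζ ≠ 0 ∧ ∑ j, ζ j ^ 2 = 0}) :
    JoinedIn {ζ : Fin n → ℂ | ζ ≠ 0 ∧ ∑ j, ζ j ^ 2 = 0} z w :=
  (isPathConnected_nullQuadric hn).joinedIn z hz w hw
end

section
/- With Weierstrass data f₁ = (1−g²)η, f₂ = i(1+g²)η, f₃ = 2gη on an open set M ⊆ ℂ (η holomorphic nowhere vanishing, g holomorphic), the map f = (f₁,f₂,f₃) factors through the double cover π(u,v) = (u² − v², i(u² + v²), 2uv) if and only if η admits a holomorphic square root on M: if η = σ² for holomorphic σ, then f = π(σ, gσ); conversely, if f = π(σ, τ) for holomorphic (σ,τ) : M → ℂ² \ {0}, then σ² = η. -/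
open Complex

/-- The spinorial map `π(u,v) = (u² − v², i(u² + v²), 2uv)`. -/
noncomputable def spin (p : ℂ × ℂ) : ℂ × ℂ × ℂ :=
  (p.1 ^ 2 - p.2 ^ 2, Complex.I * (p.1 ^ 2 + p.2 ^ 2), 2 * p.1 * p.2)

/-- The Weierstrass data `f = ((1−g²)η, i(1+g²)η, 2gη)` factors through the
spinorial double cover `π` iff `η` admits a holomorphic square root:
if `σ² = η` then `f = π ∘ (σ, gσ)`, and conversely if `f = π ∘ (σ, τ)` for
holomorphic `(σ,τ) : M → ℂ² \ {0}` then `σ² = η`. -/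
theorem stmt13 (M : Set ℂ) (hM : IsOpen M) (hMc : IsConnected M) (η g : ℂ → ℂ)
    (hη : DifferentiableOn ℂ η M) (hg : DifferentiableOn ℂ g M)
    (hη0 : ∀ z ∈ M, η z ≠ 0) :
    (∀ σ : ℂ → ℂ, DifferentiableOn ℂ σ M → (∀ z ∈ M, σ z ^ 2 = η z) →
      ∀ z ∈ M, spin (σ z, g z * σ z)
        = ((1 - g z ^ 2) * η z, Complex.I * (1 + g z ^ 2) * η z, 2 * g z * η z)) ∧
    (∀ σ τ : ℂ → ℂ, DifferentiableOn ℂ σ M → DifferentiableOn ℂ τ M →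
      (∀ z ∈ M, (σ z, τ z) ≠ (0, 0)) →
      (∀ z ∈ M, spin (σ z, τ z)
        = ((1 - g z ^ 2) * η z, Complex.I * (1 + g z ^ 2) * η z, 2 * g z * η z)) →
      ∀ z ∈ M, σ z ^ 2 = η z) := by
  constructor
  · intro σ hσ hσ2 z hz
    simp only [spin]
    rw [← hσ2 z hz]
    refine Prod.ext ?_ (Prod.ext ?_ ?_) <;> simp only [] <;> ring
  · intro σ τ hσ hτ hne hsp z hz
    have h := hsp z hz
    simp only [spin, Prod.mk.injEq] at h
    obtain ⟨h1, h2, h3⟩ := h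
    have h2' : σ z ^ 2 + τ z ^ 2 = (1 + g z ^ 2) * η z := by
      exact mul_left_cancel₀ Complex.I_ne_zero (by linear_combination h2)
    have : 2 * σ z ^ 2 = 2 * η z := by linear_combination h1 + h2'
    have h2ne : (2:ℂ) ≠ 0 := two_ne_zero
    exact mul_left_cancel₀ h2ne this
end

section
/- The function η(ζ) = 1 − ζ⁻⁴ does not admit a holomorphic square root on any punctured disc {0 < |ζ − 1| < r} (r < 1) centered at 1 (and likewise at −1, i, −i), but it does admit a holomorphic square root on the punctured unit disc {0 < |ζ| < 1}. (Henneberg surface example.) -/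
/-!
At a fourth root of unity `a`, `η` has a simple zero. A holomorphic square root `h` on a
punctured disc about `a` tends to `0` at `a`, so by Riemann's removable singularity theorem it
extends holomorphically with `h a = 0`; then `η' a = 2 h a h' a = 0`, a contradiction.
On the punctured unit disc `η = -(1 - ζ⁴) / ζ⁴` and `1 - ζ⁴` lies in the right half-plane, so
`i ζ⁻² √(1 - ζ⁴)` with the principal branch is a square root.
-/

open Complex Filter Topology

theorem Filter.Tendsto.of_sq_tendsto_zero {α 𝕜 : Type*} [NormedDivisionRing 𝕜] {l : Filter α}
    {h : α → 𝕜} (hh : Tendsto (fun x => h x ^ 2) l (𝓝 0)) : Tendsto h l (𝓝 0) := by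
  rw [tendsto_zero_iff_norm_tendsto_zero] at hh ⊢
  have hsqrt := (Real.continuous_sqrt.tendsto 0).comp hh
  simp only [Function.comp_def, norm_pow, Real.sqrt_sq (norm_nonneg _), Real.sqrt_zero] at hsqrt
  exact hsqrt

theorem HasDerivAt.eq_zero_of_eventuallyEq_sq {f H : ℂ → ℂ} {f' a : ℂ} (hf : HasDerivAt f f' a)
    (hH : DifferentiableAt ℂ H a) (hHa : H a = 0) (hfH : (fun z => H z ^ 2) =ᶠ[𝓝 a] f) :
    f' = 0 := by
  have hsq : HasDerivAt (fun z => H z ^ 2) 0 a := by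
    simpa [hHa] using hH.hasDerivAt.fun_pow 2
  exact hf.unique (hsq.congr_of_eventuallyEq hfH.symm)

theorem Complex.not_exists_sqrt_of_hasDerivAt_ne_zero {f : ℂ → ℂ} {f' a : ℂ}
    (hf : HasDerivAt f f' a) (hfa : f a = 0) (hf' : f' ≠ 0) {s : Set ℂ} (hs : IsOpen s)
    (hsa : s ∈ 𝓝[≠] a) : ¬∃ h : ℂ → ℂ, DifferentiableOn ℂ h s ∧ ∀ z ∈ s, h z ^ 2 = f z := by
  rintro ⟨h, hd, hsq⟩
  have hh : Tendsto h (𝓝[≠] a) (𝓝 0) := by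
    refine Tendsto.of_sq_tendsto_zero ?_
    have hft : Tendsto f (𝓝[≠] a) (𝓝 0) :=
      hfa ▸ hf.continuousAt.tendsto.mono_left nhdsWithin_le_nhds
    exact hft.congr' (eventually_of_mem hsa fun z hz => (hsq z hz).symm)
  set H := Function.update h a 0
  have hHd : ∀ᶠ z in 𝓝[≠] a, DifferentiableAt ℂ H z := by
    filter_upwards [hsa, self_mem_nhdsWithin] with z hzs hza
    refine (hd.differentiableAt (hs.mem_nhds hzs)).congr_of_eventuallyEq ?_
    filter_upwards [isOpen_compl_singleton.mem_nhds hza] with w hw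
    exact Function.update_of_ne hw 0 h
  have hH : DifferentiableAt ℂ H a :=
    (analyticAt_of_differentiable_on_punctured_nhds_of_continuousAt hHd
      (continuousAt_update_same.2 hh)).differentiableAt
  refine hf' (hf.eq_zero_of_eventuallyEq_sq hH (Function.update_self a 0 h) ?_)
  have hsa' : insert a s ∈ 𝓝 a := insert_mem_nhds_iff.2 hsa
  filter_upwards [hsa'] with z hz
  rcases eq_or_ne z a with rfl | hza
  · simp [H, hfa]
  · rw [show H z = h z from Function.update_of_ne hza 0 h]
    exact hsq z (hz.resolve_left hza)

theorem hasDerivAt_one_sub_inv_pow (n : ℕ) {a : ℂ} (ha : a ≠ 0) :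
    HasDerivAt (fun z : ℂ => 1 - (z ^ n)⁻¹) (n * a ^ (n - 1) / (a ^ n) ^ 2) a := by
  simpa [neg_div] using ((hasDerivAt_pow n a).inv (pow_ne_zero n ha)).const_sub 1

theorem setOf_norm_sub_pos_lt_eq (a : ℂ) (r : ℝ) :
    {ζ : ℂ | 0 < ‖ζ - a‖ ∧ ‖ζ - a‖ < r} = Metric.ball a r \ {a} := by
  ext ζ
  simp [Metric.mem_ball, dist_eq, sub_ne_zero, and_comm]

theorem I_mul_div_pow_sq {m : ℕ} {ζ w : ℂ} (hζ : ζ ≠ 0) (hw : w ^ 2 = 1 - ζ ^ (2 * m)) :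
    (I * w / ζ ^ m) ^ 2 = 1 - (ζ ^ (2 * m))⁻¹ := by
  rw [div_pow, mul_pow, hw, I_sq, pow_mul']
  field_simp
  ring

theorem one_sub_pow_mem_slitPlane {ζ : ℂ} (hζ : ‖ζ‖ < 1) {n : ℕ} (hn : n ≠ 0) :
    1 - ζ ^ n ∈ slitPlane := by
  simpa [sub_eq_add_neg] using
    mem_slitPlane_of_norm_lt_one (z := -ζ ^ n) (by simpa using pow_lt_one₀ (norm_nonneg ζ) hζ hn)

theorem exists_sqrt_one_sub_inv_pow_two_mul {m : ℕ} (hm : m ≠ 0) :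
    ∃ h : ℂ → ℂ, DifferentiableOn ℂ h {ζ : ℂ | 0 < ‖ζ‖ ∧ ‖ζ‖ < 1} ∧
      ∀ ζ ∈ {ζ : ℂ | 0 < ‖ζ‖ ∧ ‖ζ‖ < 1}, h ζ ^ 2 = 1 - (ζ ^ (2 * m))⁻¹ := by
  have hslit : ∀ ζ ∈ {ζ : ℂ | 0 < ‖ζ‖ ∧ ‖ζ‖ < 1}, 1 - ζ ^ (2 * m) ∈ slitPlane := fun ζ hζ =>
    one_sub_pow_mem_slitPlane hζ.2 (by omega)
  refine ⟨fun ζ => I * (1 - ζ ^ (2 * m)) ^ (2⁻¹ : ℂ) / ζ ^ m, ?_, fun ζ hζ => ?_⟩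
  · refine ((differentiableOn_const I).mul
      (((differentiableOn_const 1).sub (differentiableOn_pow _)).cpow_const hslit)).div
      (differentiableOn_pow m) fun ζ hζ => pow_ne_zero m (norm_pos_iff.1 hζ.1)
  · exact I_mul_div_pow_sq (norm_pos_iff.1 hζ.1) (cpow_ofNat_inv_pow _ 2)

theorem not_exists_sqrt_one_sub_inv_pow_near_root {n : ℕ} (hn : n ≠ 0) {a : ℂ} (ha : a ^ n = 1)
    {r : ℝ} (hr : 0 < r) :
    ¬∃ h : ℂ → ℂ, DifferentiableOn ℂ h {ζ : ℂ | 0 < ‖ζ - a‖ ∧ ‖ζ - a‖ < r} ∧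
      ∀ ζ ∈ {ζ : ℂ | 0 < ‖ζ - a‖ ∧ ‖ζ - a‖ < r}, h ζ ^ 2 = 1 - (ζ ^ n)⁻¹ := by
  have ha0 : a ≠ 0 := by
    rintro rfl
    simp [zero_pow hn] at ha
  rw [setOf_norm_sub_pos_lt_eq]
  refine not_exists_sqrt_of_hasDerivAt_ne_zero (hasDerivAt_one_sub_inv_pow n ha0) (by simp [ha])
    ?_ (Metric.isOpen_ball.sdiff isClosed_singleton)
    (sdiff_mem_nhdsWithin_compl (Metric.ball_mem_nhds a hr) _)
  simp [ha, hn, ha0]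

/-- Henneberg example: `η(ζ) = 1 − ζ⁻⁴` has no holomorphic square root on any
punctured disc `{0 < |ζ − a| < r}` with `r < 1` centered at `a ∈ {1, −1, i, −i}`,
but it does have a holomorphic square root on the punctured unit disc
`{0 < |ζ| < 1}`. -/
theorem stmt16 :
    (∀ a : ℂ, a ∈ ({1, -1, Complex.I, -Complex.I} : Set ℂ) →
      ∀ r : ℝ, 0 < r → r < 1 →
        ¬∃ h : ℂ → ℂ,
          DifferentiableOn ℂ h {ζ : ℂ | 0 < ‖ζ - a‖ ∧ ‖ζ - a‖ < r} ∧
          ∀ ζ ∈ {ζ : ℂ | 0 < ‖ζ - a‖ ∧ ‖ζ - a‖ < r},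
            h ζ ^ 2 = 1 - (ζ ^ 4)⁻¹) ∧
    (∃ h : ℂ → ℂ,
      DifferentiableOn ℂ h {ζ : ℂ | 0 < ‖ζ‖ ∧ ‖ζ‖ < 1} ∧
      ∀ ζ ∈ {ζ : ℂ | 0 < ‖ζ‖ ∧ ‖ζ‖ < 1},
        h ζ ^ 2 = 1 - (ζ ^ 4)⁻¹) := by
  refine ⟨fun a ha r hr _ => ?_, exists_sqrt_one_sub_inv_pow_two_mul two_ne_zero⟩
  have ha4 : a ^ 4 = 1 := by
    rcases ha with rfl | rfl | rfl | rfl <;> norm_num [I_pow_four]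
  exact not_exists_sqrt_one_sub_inv_pow_near_root four_ne_zero ha4 hr
end
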